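/- For every real t > 2, define x₀(t) := √(1 − 2/t), let x₀'(t) = 1/(t² √(1 − 2/t)) be its derivative, and set X(t) := t − 1 − x₀(t)(1 − x₀(t))/x₀'(t) and Y(t) := −(1 − x₀(t))²/x₀'(t). Then ( Y(t) + 2·X(t) )² = 4·( Y(t) + 1 ). (This says that for the t = 0 touching-path model with uniform endpoint spacing p = 1, i.e. endpoint distribution α(u) = u, the south-east branch of the arctic curve, given by Theorem parametrization with x₀(t) = (1 − 2/t)^{1/2}, is an arc of the parabola (y + 2x)² − 4(y + 1) = 0.) -/
import Mathlib


/-- For the t = 0 touching-path model with uniform endpoint spacing (α(u) = u), the SE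
branch of the arctic curve, parametrized with x₀(t) = √(1 − 2/t) and derivative
x₀'(t) = 1/(t²√(1 − 2/t)), lies on the parabola (y + 2x)² − 4(y + 1) = 0. -/
theorem SE_branch_on_parabola (t : ℝ) (ht : 2 < t) :
    ((-(1 - Real.sqrt (1 - 2 / t)) ^ 2 / (1 / (t ^ 2 * Real.sqrt (1 - 2 / t)))) +
        2 * (t - 1 - Real.sqrt (1 - 2 / t) * (1 - Real.sqrt (1 - 2 / t)) /
          (1 / (t ^ 2 * Real.sqrt (1 - 2 / t))))) ^ 2 =
      4 * ((-(1 - Real.sqrt (1 - 2 / t)) ^ 2 / (1 / (t ^ 2 * Real.sqrt (1 - 2 / t)))) + 1) := by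
  have ht0 : (0:ℝ) < t := by linarith
  have harg : (0:ℝ) < 1 - 2 / t := by
    have : 2 / t < 1 := (div_lt_one ht0).mpr ht
    linarith
  set s := Real.sqrt (1 - 2 / t) with hs
  have hspos : 0 < s := Real.sqrt_pos.mpr harg
  have hs2 : s ^ 2 = 1 - 2 / t := Real.sq_sqrt harg.le
  have hts : t * s ^ 2 = t - 2 := by
    rw [hs2]; field_simp
  rw [div_div_eq_mul_div, div_div_eq_mul_div, div_one, div_one]
  linear_combination (-4*t + 4*t^2*s - 2*t^2*s^2 - t^3*s^2 + t^3*s^4) * hts
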